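/- arXiv:2407.02063 — 2 statements merged into one kernel-verified Lean document; each statement's English description precedes it below -/
import Mathlib

section
/- Let n > 1, let G be a profinite group, and let χ₁, χ₂ : G → ℤ/nℤ be continuous homomorphisms. If φ : G → D̄_n is the continuous homomorphism given by φ(g) = (χ₁(g), χ₂(g)) under the identification D̄_n ≅ ℤ/nℤ × ℤ/nℤ, then the connecting class δφ ∈ H²(G, ℤ/nℤ) of the central extension 1 → ℤ/nℤ → D_n → D̄_n → 1 equals the cup product class [χ₁ ∪ χ₂], where (χ₁ ∪ χ₂)(g₁, g₂) = χ₁(g₁)·χ₂(g₂). Equivalently, for any set-theoretic lift φ̃ of φ to D_n with third-entry cochain α ∈ C¹(G, ℤ/nℤ), the 2-cocycle (g₁,g₂) ↦ φ̃(g₁)φ̃(g₂)φ̃(g₁g₂)⁻¹ ∈ Z equals χ₁ ∪ χ₂ + dα as a function. -/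
namespace TripleSymbolTest

/-- The Heisenberg group `D_n` of upper unitriangular `3 × 3` matrices over `ℤ/nℤ`:
an element `(a, b, c)` stands for the matrix `![![1, a, b], ![0, 1, c], ![0, 0, 1]]`. -/
def Heis (n : ℕ) : Type := ZMod n × ZMod n × ZMod n

namespace Heis
variable {n : ℕ}

instance : Mul (Heis n) :=
  ⟨fun x y => (x.1 + y.1, x.2.1 + y.2.1 + x.1 * y.2.2, x.2.2 + y.2.2)⟩
instance : One (Heis n) := ⟨((0 : ZMod n), (0 : ZMod n), (0 : ZMod n))⟩
instance : Inv (Heis n) := ⟨fun x => (-x.1, x.1 * x.2.2 - x.2.1, -x.2.2)⟩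

@[simp] theorem mul_def (x y : Heis n) :
    x * y = (x.1 + y.1, x.2.1 + y.2.1 + x.1 * y.2.2, x.2.2 + y.2.2) := rfl
@[simp] theorem inv_def (x : Heis n) :
    x⁻¹ = (-x.1, x.1 * x.2.2 - x.2.1, -x.2.2) := rfl
@[simp] theorem one_def : (1 : Heis n) = ((0 : ZMod n), (0 : ZMod n), (0 : ZMod n)) := rfl

instance : Group (Heis n) where
  mul := (· * ·)
  one := 1
  inv := (·⁻¹)
  mul_assoc x y z := by
    rw [mul_def (x * y), mul_def x (y * z), mul_def x y, mul_def y z]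
    refine Prod.ext ?_ (Prod.ext ?_ ?_) <;> dsimp <;> ring
  one_mul x := by
    rw [mul_def, one_def]
    refine Prod.ext ?_ (Prod.ext ?_ ?_) <;> dsimp <;> ring
  mul_one x := by
    rw [mul_def, one_def]
    refine Prod.ext ?_ (Prod.ext ?_ ?_) <;> dsimp <;> ring
  inv_mul_cancel x := by
    rw [mul_def, inv_def, one_def]
    refine Prod.ext ?_ (Prod.ext ?_ ?_) <;> dsimp <;> ring

/-- The projection `D_n → D̄_n = D_n/Z`, where `D̄_n` is identified with
`ℤ/nℤ × ℤ/nℤ` (written additively) via `(a, c)`. -/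
def proj (x : Heis n) : ZMod n × ZMod n := (x.1, x.2.2)

/-- The projection is a homomorphism onto `D̄_n ≅ ℤ/nℤ × ℤ/nℤ`. -/
theorem proj_mul (x y : Heis n) : proj (x * y) = proj x + proj y := rfl

/-- The kernel of the projection `D_n → D̄_n` is exactly the center `Z` of `D_n`,
which is identified with `ℤ/nℤ` via the `b`-entry; thus
`1 → ℤ/nℤ → D_n → D̄_n → 1` is a central extension. -/
theorem proj_eq_zero_iff_center (x : Heis n) :
    proj x = 0 ↔ x ∈ Subgroup.center (Heis n) := by
  constructor
  · intro h
    have h1 : x.1 = 0 := congrArg Prod.fst h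
    have h2 : x.2.2 = 0 := congrArg (fun p => p.2) h
    rw [Subgroup.mem_center_iff]
    intro y
    simp only [mul_def, h1, h2]
    refine Prod.ext ?_ (Prod.ext ?_ ?_) <;> dsimp <;> ring
  · intro h
    rw [Subgroup.mem_center_iff] at h
    have hy := congrArg (fun p : Heis n => p.2.1)
      (h ((0 : ZMod n), (0 : ZMod n), (1 : ZMod n)))
    have hz := congrArg (fun p : Heis n => p.2.1)
      (h ((1 : ZMod n), (0 : ZMod n), (0 : ZMod n)))
    erw [mul_def, mul_def] at hy
    erw [mul_def, mul_def] at hz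
    dsimp only at hy hz
    have h1 : x.1 = 0 := by linear_combination - hy
    have h2 : x.2.2 = 0 := by linear_combination hz
    exact Prod.ext h1 h2

end Heis

theorem Heis.mul_mul_inv_snd_fst {n : ℕ} (x y z : Heis n) (hz : z.1 = x.1 + y.1) :
    (x * y * z⁻¹).2.1 = x.1 * y.2.2 + (y.2.1 - z.2.1 + x.2.1) := by
  rw [Heis.mul_def (x * y), Heis.mul_def x y, Heis.inv_def, hz]
  ring

theorem statement1_general (n : ℕ)
    (G : Type*) [Group G]
    (χ₁ χ₂ : G → ZMod n)
    (hχ₁ : ∀ g h, χ₁ (g * h) = χ₁ g + χ₁ h)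
    (φ : G → ZMod n × ZMod n) (hφ : ∀ g, φ g = (χ₁ g, χ₂ g))
    (φt : G → Heis n) (hlift : ∀ g, Heis.proj (φt g) = φ g)
    (α : G → ZMod n) (hα : ∀ g, α g = (φt g).2.1) :
    ∀ g₁ g₂ : G, (φt g₁ * φt g₂ * (φt (g₁ * g₂))⁻¹).2.1
      = χ₁ g₁ * χ₂ g₂ + (α g₂ - α (g₁ * g₂) + α g₁) := by
  have hproj : ∀ g, ((φt g).1, (φt g).2.2) = (χ₁ g, χ₂ g) := fun g => (hlift g).trans (hφ g)
  have hfst : ∀ g, (φt g).1 = χ₁ g := fun g => congrArg Prod.fst (hproj g)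
  have hsnd : ∀ g, (φt g).2.2 = χ₂ g := fun g => congrArg Prod.snd (hproj g)
  intro g₁ g₂
  rw [Heis.mul_mul_inv_snd_fst _ _ _ (by rw [hfst, hfst, hfst, hχ₁]), hfst, hsnd, hα, hα, hα]

/-- Lemma 2 of the paper and its proof.  Let `n > 1`, let `G` be a
profinite group and `χ₁, χ₂ : G → ℤ/nℤ` continuous homomorphisms, and let
`φ : G → D̄_n ≅ ℤ/nℤ × ℤ/nℤ` be `φ(g) = (χ₁(g), χ₂(g))`.  Then for any set-theoretic lift
`φ̃ : G → D_n` of `φ` with third-entry (`b`-entry) cochain `α ∈ C¹(G, ℤ/nℤ)`, the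
`2`-cocycle `(g₁,g₂) ↦ φ̃(g₁)φ̃(g₂)φ̃(g₁g₂)⁻¹ ∈ Z ≅ ℤ/nℤ` representing the connecting
class `δφ` equals `χ₁ ∪ χ₂ + dα` as a function, where
`(χ₁ ∪ χ₂)(g₁,g₂) = χ₁(g₁)·χ₂(g₂)`; in particular `δφ = [χ₁ ∪ χ₂]` in `H²(G, ℤ/nℤ)`. -/
theorem statement1 (n : ℕ) (hn : 1 < n)
    (G : Type*) [Group G] [TopologicalSpace G] [IsTopologicalGroup G]
    [CompactSpace G] [T2Space G] [TotallyDisconnectedSpace G]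
    (χ₁ χ₂ : G → ZMod n)
    (hχ₁ : ∀ g h, χ₁ (g * h) = χ₁ g + χ₁ h) (hχ₂ : ∀ g h, χ₂ (g * h) = χ₂ g + χ₂ h)
    (hc₁ : IsLocallyConstant χ₁) (hc₂ : IsLocallyConstant χ₂)
    (φ : G → ZMod n × ZMod n) (hφ : ∀ g, φ g = (χ₁ g, χ₂ g))
    (φt : G → Heis n) (hlift : ∀ g, Heis.proj (φt g) = φ g)
    (α : G → ZMod n) (hα : ∀ g, α g = (φt g).2.1) :
    ∀ g₁ g₂ : G, (φt g₁ * φt g₂ * (φt (g₁ * g₂))⁻¹).2.1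
      = χ₁ g₁ * χ₂ g₂ + (α g₂ - α (g₁ * g₂) + α g₁) :=
  statement1_general n G χ₁ χ₂ hχ₁ φ hφ φt hlift α hα

end TripleSymbolTest
end

section
/- Let F be a number field containing the n-th roots of unity (n > 1), G = Gal(F̄/F), and let χ₁, χ₂, χ₃ : G → ℤ/nℤ be continuous characters with ramification sets S₁, S₂, S₃. Let S be a finite set of places of F containing S₁ ∪ S₂ ∪ S₃, all places dividing n, and all archimedean places. Then there is a 2-cochain η ∈ C²(G, ℤ/nℤ) such that dη = χ₁ ∪ χ₂ ∪ χ₃ and η is in the image of the inflation map C²(G_S, ℤ/nℤ) → C²(G, ℤ/nℤ), where G_S is the Galois group of the maximal extension of F unramified outside S. -/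
namespace TripleSymbolTest

/-- Coboundary of an (inhomogeneous, continuous) `1`-cochain with values in `ℤ/nℤ`
(trivial action). -/
def d1 {G : Type*} [Group G] {n : ℕ} (a : G → ZMod n) : G → G → ZMod n :=
  fun g h => a h - a (g * h) + a g

/-- Coboundary of a `2`-cochain. -/
def d2 {G : Type*} [Group G] {n : ℕ} (e : G → G → ZMod n) : G → G → G → ZMod n :=
  fun g h k => e h k - e (g * h) k + e g (h * k) - e g h

/-- Coboundary of a `3`-cochain. -/
def d3 {G : Type*} [Group G] {n : ℕ} (c : G → G → G → ZMod n) :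
    G → G → G → G → ZMod n :=
  fun g h k l => c h k l - c (g * h) k l + c g (h * k) l - c g h (k * l) + c g h k

/-- Cup product of two `1`-cochains, at the level of cochains. -/
def cup11 {G : Type*} {n : ℕ} (a b : G → ZMod n) : G → G → ZMod n :=
  fun g h => a g * b h

/-- Cup product of three `1`-cochains, at the level of cochains. -/
def cup111 {G : Type*} {n : ℕ} (a b c : G → ZMod n) : G → G → G → ZMod n :=
  fun g h k => a g * b h * c k

/-- A function on `1` variable factors through a projection `π`. -/
def Factors1 {A B C : Type*} (π : A → B) (f : A → C) : Prop :=
  ∃ g : B → C, ∀ x, f x = g (π x)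

/-- A function of `2` variables factors through a projection `π`. -/
def Factors2 {A B C : Type*} (π : A → B) (f : A → A → C) : Prop :=
  ∃ g : B → B → C, ∀ x y, f x y = g (π x) (π y)

/-- `χ : G → ℤ/nℤ` is a homomorphism (an additive character). -/
def IsAddChar {G : Type*} [Group G] {n : ℕ} (χ : G → ZMod n) : Prop :=
  ∀ g h, χ (g * h) = χ g + χ h

/-- The absolute Galois group `Gal(F̄/F)` (with the Krull topology). -/
abbrev Gal (F : Type*) [Field F] : Type _ :=
  AlgebraicClosure F ≃ₐ[F] AlgebraicClosure F

/-- An axiomatization of the class-field-theoretic set-up used to define the triple symbol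
over a number field `F` whose absolute Galois group is `G`:  `Place` is the set of places of
`F`; `Gv v` is the local absolute Galois group at `v`, mapping to `G` via a fixed embedding
`F̄ → F̄ᵥ`; `Gur v = Gal(Fᵥᵘʳ/Fᵥ)` is the unramified quotient; `GS S` is the Galois group of
the maximal extension of `F` unramified outside `S`; `inv v` is the invariant map of local
class field theory (normalized by the fixed identification `μₙ ≃ ℤ/nℤ`). -/
structure Setup (n : ℕ) (G : Type*) [Group G] [TopologicalSpace G]
    (Place : Type*) (Gv : Place → Type*) [∀ v, Group (Gv v)]
    (Gur : Place → Type*) [∀ v, Group (Gur v)]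
    (GS : Finset Place → Type*) [∀ S, Group (GS S)] : Type _ where
  /-- `v` is an archimedean place. -/
  isArch : Place → Prop
  /-- `v` is a real place. -/
  isReal : Place → Prop
  real_isArch : ∀ v, isReal v → isArch v
  /-- the (finitely many) archimedean places -/
  archFinset : Finset Place
  mem_archFinset : ∀ v, v ∈ archFinset ↔ isArch v
  /-- `v` divides `n` -/
  dividesN : Place → Prop
  dividesN_notArch : ∀ v, dividesN v → ¬ isArch v
  /-- the embedding `G_v = Gal(F̄ᵥ/Fᵥ) → G` induced by a fixed embedding `F̄ → F̄ᵥ` -/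
  locG : ∀ v, Gv v →* G
  /-- the projection `G_v → G_v^{ur} = Gal(Fᵥᵘʳ/Fᵥ)` -/
  projUr : ∀ v, Gv v →* Gur v
  projUr_surj : ∀ v, Function.Surjective (projUr v)
  /-- by convention, at archimedean places "unramified" means "constant" -/
  gur_arch_trivial : ∀ v, isArch v → ∀ x y : Gur v, x = y
  /-- the wild inertia subgroup of `G_v` -/
  wild : ∀ v, Subgroup (Gv v)
  wild_le_inertia : ∀ v, ∀ g ∈ wild v, projUr v g = 1
  /-- the projection `G → G_S` onto the Galois group of the maximal extension
  unramified outside `S` -/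
  projS : ∀ S, G →* GS S
  projS_surj : ∀ S, Function.Surjective (projS S)
  /-- a continuous character unramified outside `S` is inflated from `G_S` -/
  char_inflates : ∀ (S : Finset Place) (χ : G → ZMod n), IsAddChar χ →
    IsLocallyConstant χ →
    (∀ v, v ∉ S → Factors1 (projUr v) (fun x => χ (locG v x))) →
    Factors1 (projS S) χ
  /-- the localization at `v ∉ S` of a cochain inflated from `G_S` is unramified -/
  loc_unramified : ∀ (S : Finset Place) (v : Place), v ∉ S →
    ∀ f : G → G → ZMod n, Factors2 (projS S) f →
      Factors2 (projUr v) (fun x y => f (locG v x) (locG v y))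
  /-- the invariant map of local class field theory on (continuous) `2`-cochains;
  only its values on `2`-cocycles matter -/
  inv : ∀ v, (Gv v → Gv v → ZMod n) → ZMod n
  inv_add : ∀ v a b, inv v (a + b) = inv v a + inv v b
  /-- `inv` vanishes on coboundaries, i.e. it is defined on `H²(G_v, ℤ/nℤ)` -/
  inv_coboundary : ∀ v (a : Gv v → ZMod n), inv v (d1 a) = 0
  /-- `inv_v = 0` at complex places, and at real places unless `n` is even -/
  inv_arch : ∀ v, isArch v → ¬ (isReal v ∧ Even n) → ∀ c, inv v c = 0
  /-- `H²(G_v^{ur}, ℤ/nℤ) = 0` -/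
  h2ur_vanishing : ∀ v (c : Gur v → Gur v → ZMod n), d2 c = 0 → ∃ a, c = d1 a
  /-- `H³(G_S, ℤ/nℤ) = 0` for `S` containing the places dividing `n` and the
  archimedean places -/
  h3S_vanishing : ∀ S : Finset Place, (∀ v, dividesN v → v ∈ S) →
    (∀ v, isArch v → v ∈ S) →
    ∀ c : GS S → GS S → GS S → ZMod n, d3 c = 0 → ∃ e, c = d2 e
  /-- the global reciprocity law: the sum of the local invariants of a global
  `2`-cocycle vanishes -/
  reciprocity : ∀ T : Finset Place, (∀ v, isArch v → v ∈ T) →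
    ∀ c : G → G → ZMod n, d2 c = 0 → Factors2 (projS T) c →
      (∑ v ∈ T, inv v (fun x y => c (locG v x) (locG v y))) = 0

namespace Setup

variable {n : ℕ} {G : Type*} [Group G] [TopologicalSpace G]
  {Place : Type*} {Gv : Place → Type*} [∀ v, Group (Gv v)]
  {Gur : Place → Type*} [∀ v, Group (Gur v)]
  {GS : Finset Place → Type*} [∀ S, Group (GS S)]

variable (A : Setup n G Place Gv Gur GS)

/-- Localization `loc_v¹` of a `1`-cochain. -/
def locC1 (v : Place) (χ : G → ZMod n) : Gv v → ZMod n :=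
  fun x => χ (A.locG v x)

/-- Localization `loc_v²` of a `2`-cochain. -/
def locC2 (v : Place) (η : G → G → ZMod n) : Gv v → Gv v → ZMod n :=
  fun x y => η (A.locG v x) (A.locG v y)

/-- Localization `loc_v³` of a `3`-cochain. -/
def locC3 (v : Place) (c : G → G → G → ZMod n) : Gv v → Gv v → Gv v → ZMod n :=
  fun x y z => c (A.locG v x) (A.locG v y) (A.locG v z)

/-- `χ` is unramified at `v`. -/
def Unramified1 (v : Place) (χ : G → ZMod n) : Prop :=
  Factors1 (A.projUr v) (A.locC1 v χ)

/-- The ramification set `S_χ` of a character `χ`. -/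
def RamSet (χ : G → ZMod n) : Set Place :=
  {v | ¬ A.Unramified1 v χ}

/-- `χ` is tame at `v`: the wild inertia subgroup is contained in the kernel of
`loc_v¹ χ`. -/
def IsTame (v : Place) (χ : G → ZMod n) : Prop :=
  ∀ g ∈ A.wild v, χ (A.locG v g) = 0

/-- `η` is a global trivialization of `φ`, unramified outside `S`. -/
def IsGlobalTriv (S : Finset Place) (φ : G → G → G → ZMod n)
    (η : G → G → ZMod n) : Prop :=
  d2 η = φ ∧ Factors2 (A.projS S) η

/-- `e` is an unramified local trivialization of `φ` at `v`. -/
def IsLocalUnramTriv (v : Place) (φ : G → G → G → ZMod n)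
    (e : Gv v → Gv v → ZMod n) : Prop :=
  d2 e = A.locC3 v φ ∧ Factors2 (A.projUr v) e

/-- The sum `𝔡 = ∑_{v ∈ S} inv_v(loc_v² η − η_v)`. -/
def dSum (S : Finset Place) (η : G → G → ZMod n)
    (e : ∀ v, Gv v → Gv v → ZMod n) : ZMod n :=
  ∑ v ∈ S, A.inv v (A.locC2 v η - e v)

end Setup

end TripleSymbolTest

namespace TripleSymbolTest

open Setup in

theorem d3_cup111_eq_zero {H : Type*} [Group H] {n : ℕ} (a b c : H → ZMod n)
    (ha : IsAddChar a) (hb : IsAddChar b) (hc : IsAddChar c) :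
    d3 (cup111 a b c) = 0 := by
  funext g h k l
  simp only [d3, cup111, Pi.zero_apply]
  rw [ha, hb, hc]
  ring

/-- Proposition 1 of the paper.  Let `F` be a number field containing the
`n`-th roots of unity (`n > 1`), `G = Gal(F̄/F)`, and let `χ₁, χ₂, χ₃ : G → ℤ/nℤ` be
continuous characters with ramification sets `S₁, S₂, S₃`.  If `S` is a finite set of places
of `F` containing `S₁ ∪ S₂ ∪ S₃`, all places dividing `n` and all archimedean places, then
there is a `2`-cochain `η` with `dη = χ₁ ∪ χ₂ ∪ χ₃` which is inflated from `G_S`. -/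
theorem statement2 {n : ℕ} (hn : 1 < n)
    (F : Type*) [Field F] [NumberField F] (ζ : F) (hζ : IsPrimitiveRoot ζ n)
    {Place : Type*} {Gv : Place → Type*} [∀ v, Group (Gv v)]
    {Gur : Place → Type*} [∀ v, Group (Gur v)]
    {GS : Finset Place → Type*} [∀ S, Group (GS S)]
    (A : Setup n (Gal F) Place Gv Gur GS)
    (χ₁ χ₂ χ₃ : Gal F → ZMod n)
    (hχ₁ : IsAddChar χ₁) (hχ₂ : IsAddChar χ₂) (hχ₃ : IsAddChar χ₃)
    (hc₁ : IsLocallyConstant χ₁) (hc₂ : IsLocallyConstant χ₂)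
    (hc₃ : IsLocallyConstant χ₃)
    (S : Finset Place)
    (hram : ∀ v, v ∈ A.RamSet χ₁ ∪ A.RamSet χ₂ ∪ A.RamSet χ₃ → v ∈ S)
    (hdiv : ∀ v, A.dividesN v → v ∈ S)
    (harch : ∀ v, A.isArch v → v ∈ S) :
    ∃ η : Gal F → Gal F → ZMod n,
      d2 η = cup111 χ₁ χ₂ χ₃ ∧ Factors2 (⇑(A.projS S)) η := by
  obtain ⟨b₁, hb₁⟩ := A.char_inflates S χ₁ hχ₁ hc₁ (fun v hv => by
    by_contra h
    exact hv (hram v (Or.inl (Or.inl h))))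
  obtain ⟨b₂, hb₂⟩ := A.char_inflates S χ₂ hχ₂ hc₂ (fun v hv => by
    by_contra h
    exact hv (hram v (Or.inl (Or.inr h))))
  obtain ⟨b₃, hb₃⟩ := A.char_inflates S χ₃ hχ₃ hc₃ (fun v hv => by
    by_contra h
    exact hv (hram v (Or.inr h)))
  have addchar : ∀ (χ : Gal F → ZMod n) (b : GS S → ZMod n), IsAddChar χ →
      (∀ x, χ x = b (A.projS S x)) → IsAddChar b := by
    intro χ b hχ hb x y
    obtain ⟨g, rfl⟩ := A.projS_surj S x
    obtain ⟨h, rfl⟩ := A.projS_surj S y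
    rw [← map_mul, ← hb, ← hb, ← hb, hχ]
  obtain ⟨e, he⟩ := A.h3S_vanishing S hdiv harch (cup111 b₁ b₂ b₃)
    (d3_cup111_eq_zero b₁ b₂ b₃ (addchar χ₁ b₁ hχ₁ hb₁) (addchar χ₂ b₂ hχ₂ hb₂)
      (addchar χ₃ b₃ hχ₃ hb₃))
  refine ⟨fun g h => e (A.projS S g) (A.projS S h), ?_, ⟨e, fun _ _ => rfl⟩⟩
  funext g h k
  have : cup111 b₁ b₂ b₃ (A.projS S g) (A.projS S h) (A.projS S k)
      = d2 e (A.projS S g) (A.projS S h) (A.projS S k) := by rw [← he]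
  simp only [d2, map_mul]
  simp only [d2] at this
  rw [← this]
  simp [cup111, ← hb₁, ← hb₂, ← hb₃]


end TripleSymbolTest
end
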